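/- Let Ψ : [0,∞) → [0,∞) be a C² convex function with Ψ(0) = 0 whose derivative Ψ' is concave. Then for all z₁, z₂ > 0, 0 ≤ Ψ(z₁+z₂) − Ψ(z₁) − Ψ(z₂) ≤ 2·(z₁·Ψ(z₂) + z₂·Ψ(z₁))/(z₁+z₂). -/

import Mathlib

/-!
Superadditivity is convexity of `Ψ` together with `Ψ 0 = 0`. For the upper bound, concavity of
`Ψ'` gives `Ψ'(a + t) - Ψ' t ≤ Ψ' a - Ψ' 0 ≤ Ψ' a`, so integrating in `t` over `[0, b]` bounds the
defect `Ψ(a + b) - Ψ a - Ψ b` by `b Ψ'(a)`, and symmetrically by `a Ψ'(b)`. Since `Ψ'` lies above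
its chord from `0`, also `x Ψ'(x) ≤ 2 Ψ(x)`. Weighting the two defect bounds by `z₁` and `z₂`
and inserting the last inequality gives the claim.
-/

open Set

theorem ConvexOn.add_le_map_add_add_map_zero {f : ℝ → ℝ} {s : Set ℝ} (hf : ConvexOn ℝ s f)
    (h0 : 0 ∈ s) {x y : ℝ} (hxy : x + y ∈ s) (hx : 0 < x) (hy : 0 < y) :
    f x + f y ≤ f (x + y) + f 0 := by
  have hx' := hf.secant_mono_aux1 h0 hxy hx (lt_add_of_pos_right x hy)
  have hy' := hf.secant_mono_aux1 h0 hxy hy (lt_add_of_pos_left y hx)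
  have hxy0 : 0 < x + y := by positivity
  refine le_of_mul_le_mul_left ?_ hxy0
  linarith

theorem ConcaveOn.map_add_add_map_zero_le {f : ℝ → ℝ} {s : Set ℝ} (hf : ConcaveOn ℝ s f)
    (h0 : 0 ∈ s) {x y : ℝ} (hxy : x + y ∈ s) (hx : 0 < x) (hy : 0 < y) :
    f (x + y) + f 0 ≤ f x + f y := by
  have := hf.neg.add_le_map_add_add_map_zero h0 hxy hx hy
  simp only [Pi.neg_apply] at this
  linarith

theorem IsMinOn.deriv_nonneg {f : ℝ → ℝ} {a : ℝ} (h : IsMinOn f (Ici a) a) : 0 ≤ deriv f a := by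
  by_cases hd : DifferentiableAt ℝ f a
  · refine ge_of_tendsto (hd.hasDerivAt.tendsto_slope.mono_left (nhdsGT_le_nhdsNE a)) ?_
    filter_upwards [self_mem_nhdsWithin] with x (hx : a < x)
    rw [slope_def_field]
    exact div_nonneg (sub_nonneg.2 (h hx.le)) (sub_nonneg.2 hx.le)
  · rw [deriv_zero_of_not_differentiableAt hd]

theorem sub_le_sub_of_hasDerivAt_le {f g f' g' : ℝ → ℝ} {a b : ℝ} (hab : a ≤ b)
    (hf : ContinuousOn f (Icc a b)) (hg : ContinuousOn g (Icc a b))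
    (hf' : ∀ t ∈ Ioo a b, HasDerivAt f (f' t) t) (hg' : ∀ t ∈ Ioo a b, HasDerivAt g (g' t) t)
    (hle : ∀ t ∈ Ioo a b, f' t ≤ g' t) :
    f b - f a ≤ g b - g a := by
  have hmono : MonotoneOn (g - f) (Icc a b) := by
    refine monotoneOn_of_hasDerivWithinAt_nonneg (convex_Icc a b) (hg.sub hf) (f' := g' - f')
      (fun t ht => ?_) (fun t ht => ?_) <;> rw [interior_Icc] at ht
    · exact ((hg' t ht).sub (hf' t ht)).hasDerivWithinAt
    · exact sub_nonneg.2 (hle t ht)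
  have := hmono (left_mem_Icc.2 hab) (right_mem_Icc.2 hab) hab
  simp only [Pi.sub_apply] at this
  linarith

section ConcaveDeriv

variable {f : ℝ → ℝ} (hc : ContinuousOn f (Ici 0)) (hd : DifferentiableOn ℝ f (Ioi 0))
  (hconc : ConcaveOn ℝ (Ici 0) (deriv f))
include hc hd hconc

theorem map_add_sub_map_sub_map_add_map_zero_le {a b : ℝ} (ha : 0 < a) (hb : 0 < b) :
    f (a + b) - f a - f b + f 0 ≤ b * (deriv f a - deriv f 0) := by
  have hcomp := sub_le_sub_of_hasDerivAt_le (f := fun t => f (a + t) - f t)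
    (g := fun t => t * (deriv f a - deriv f 0)) (f' := fun t => deriv f (a + t) - deriv f t)
    (g' := fun _ => deriv f a - deriv f 0) hb.le ?_ (by fun_prop) ?_ ?_ ?_
  · simp only [add_zero, zero_mul, sub_zero] at hcomp
    linarith
  · refine (hc.comp (continuous_const_add a).continuousOn fun t ht => ?_).sub
      (hc.mono Icc_subset_Ici_self)
    exact mem_Ici.2 (by linarith [ht.1])
  · intro t ht
    have hat : 0 < a + t := by linarith [ht.1]
    exact ((hd.differentiableAt (Ioi_mem_nhds hat)).hasDerivAt.comp_const_add a t).sub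
      (hd.differentiableAt (Ioi_mem_nhds ht.1)).hasDerivAt
  · exact fun t _ => by simpa using (hasDerivAt_id t).mul_const (deriv f a - deriv f 0)
  · intro t ht
    have := hconc.map_add_add_map_zero_le self_mem_Ici (mem_Ici.2 (by linarith [ht.1])) ha ht.1
    linarith

theorem mul_deriv_le_two_mul_sub_map_zero (hf'0 : 0 ≤ deriv f 0) {x : ℝ} (hx : 0 < x) :
    x * deriv f x ≤ 2 * (f x - f 0) := by
  have hcomp := sub_le_sub_of_hasDerivAt_le (f := fun t => deriv f x * t ^ 2 / 2)
    (g := fun t => x * f t) (f' := fun t => deriv f x * t) (g' := fun t => x * deriv f t)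
    hx.le (by fun_prop) ((hc.mono Icc_subset_Ici_self).const_smul x) ?_ ?_ ?_
  · have hx2 : x * (x * deriv f x) ≤ x * (2 * (f x - f 0)) := by linarith
    exact le_of_mul_le_mul_left hx2 hx
  · intro t _
    exact (((hasDerivAt_pow 2 t).const_mul (deriv f x)).div_const 2).congr_deriv (by ring)
  · exact fun t ht => (hd.differentiableAt (Ioi_mem_nhds ht.1)).hasDerivAt.const_mul x
  · intro t ht
    have := hconc.neg.secant_mono_aux1 self_mem_Ici (mem_Ici.2 hx.le) ht.1 ht.2
    simp only [Pi.neg_apply, sub_zero] at this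
    nlinarith [mul_nonneg (sub_nonneg.2 ht.2.le) hf'0]

end ConcaveDeriv

theorem psi_superadditivity_bound
    (Ψ : ℝ → ℝ)
    (hC2 : ContDiffOn ℝ 2 Ψ (Ici 0))
    (hnonneg : ∀ z ∈ Ici (0:ℝ), 0 ≤ Ψ z)
    (hconv : ConvexOn ℝ (Ici 0) Ψ)
    (h0 : Ψ 0 = 0)
    (hconc : ConcaveOn ℝ (Ici 0) (deriv Ψ)) :
    ∀ z₁ > (0:ℝ), ∀ z₂ > (0:ℝ),
      0 ≤ Ψ (z₁ + z₂) - Ψ z₁ - Ψ z₂ ∧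
      Ψ (z₁ + z₂) - Ψ z₁ - Ψ z₂ ≤ 2 * (z₁ * Ψ z₂ + z₂ * Ψ z₁) / (z₁ + z₂) := by
  intro z₁ hz₁ z₂ hz₂
  have hc : ContinuousOn Ψ (Ici 0) := hC2.continuousOn
  have hd : DifferentiableOn ℝ Ψ (Ioi 0) :=
    (hC2.differentiableOn two_ne_zero).mono Ioi_subset_Ici_self
  have hΨ'0 : 0 ≤ deriv Ψ 0 := IsMinOn.deriv_nonneg fun z hz => by simpa [h0] using hnonneg z hz
  have hz : z₁ + z₂ ∈ Ici 0 := mem_Ici.2 (by positivity)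
  have hD₁ : Ψ (z₁ + z₂) - Ψ z₁ - Ψ z₂ ≤ z₂ * deriv Ψ z₁ := by
    linarith [map_add_sub_map_sub_map_add_map_zero_le hc hd hconc hz₁ hz₂, mul_nonneg hz₂.le hΨ'0]
  have hD₂ : Ψ (z₁ + z₂) - Ψ z₁ - Ψ z₂ ≤ z₁ * deriv Ψ z₂ := by
    linarith [add_comm z₁ z₂ ▸ map_add_sub_map_sub_map_add_map_zero_le hc hd hconc hz₂ hz₁,
      mul_nonneg hz₁.le hΨ'0]
  have hE₁ := mul_deriv_le_two_mul_sub_map_zero hc hd hconc hΨ'0 hz₁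
  have hE₂ := mul_deriv_le_two_mul_sub_map_zero hc hd hconc hΨ'0 hz₂
  rw [h0, sub_zero] at hE₁ hE₂
  refine ⟨by linarith [hconv.add_le_map_add_add_map_zero self_mem_Ici hz hz₁ hz₂], ?_⟩
  rw [le_div_iff₀ (by positivity)]
  calc (Ψ (z₁ + z₂) - Ψ z₁ - Ψ z₂) * (z₁ + z₂)
      = z₁ * (Ψ (z₁ + z₂) - Ψ z₁ - Ψ z₂) + z₂ * (Ψ (z₁ + z₂) - Ψ z₁ - Ψ z₂) := by ring
    _ ≤ z₁ * (z₂ * deriv Ψ z₁) + z₂ * (z₁ * deriv Ψ z₂) := by gcongr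
    _ = z₂ * (z₁ * deriv Ψ z₁) + z₁ * (z₂ * deriv Ψ z₂) := by ring
    _ ≤ z₂ * (2 * Ψ z₁) + z₁ * (2 * Ψ z₂) := by gcongr
    _ = 2 * (z₁ * Ψ z₂ + z₂ * Ψ z₁) := by ring
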